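/- Let G be a strongly topological gyrogroup with symmetric neighborhood base 𝒰 at 0 and H a second-countable admissible subgyrogroup generated from 𝒰. If the quotient space G/H has a star-countable cs-network, then G has a star-countable cs-network. -/
import Mathlib


/-- A gyrogroup: groupoid with identity, inverses, gyroautomorphisms satisfying
the left gyroassociative law and the left loop property. -/
class Gyrogroup (G : Type*) where
  add : G → G → G
  zero : G
  neg : G → G
  gyr : G → G → G → G
  zero_add : ∀ a, add zero a = a
  add_zero : ∀ a, add a zero = a
  neg_add : ∀ a, add (neg a) a = zero
  add_neg : ∀ a, add a (neg a) = zero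
  gyr_add : ∀ x y a b, gyr x y (add a b) = add (gyr x y a) (gyr x y b)
  gyr_bijective : ∀ x y, Function.Bijective (gyr x y)
  left_gyroassoc : ∀ x y z, add x (add y z) = add (add x y) (gyr x y z)
  loop : ∀ x y, gyr (add x y) y = gyr x y

/-- `H` is a subgyrogroup of `G`: it contains the identity, is closed under the
operation and inverses (hence forms a gyrogroup under the inherited operation),
and the restriction of each `gyr[a,b]`, `a b ∈ H`, is an automorphism of `H`. -/
def IsSubgyrogroup {G : Type*} [Gyrogroup G] (H : Set G) : Prop :=
  Gyrogroup.zero ∈ H ∧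
  (∀ a ∈ H, Gyrogroup.neg a ∈ H) ∧
  (∀ a ∈ H, ∀ b ∈ H, Gyrogroup.add a b ∈ H) ∧
  (∀ a ∈ H, ∀ b ∈ H, Gyrogroup.gyr a b '' H = H)

/-- A topological gyrogroup: the operation is jointly continuous and inversion
is continuous. -/
class TopGyrogroup (G : Type*) [TopologicalSpace G] extends Gyrogroup G where
  continuous_add : Continuous fun p : G × G => add p.1 p.2
  continuous_neg : Continuous neg

/-- `H` is an L-subgyrogroup: a subgyrogroup with `gyr[a,h](H) = H` for all
`a ∈ G`, `h ∈ H`. -/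
def IsLSubgyrogroup {G : Type*} [Gyrogroup G] (H : Set G) : Prop :=
  IsSubgyrogroup H ∧ ∀ a : G, ∀ h ∈ H, Gyrogroup.gyr a h '' H = H

/-- The setoid identifying points of `G` with the same left coset `a ⊕ H`. -/
def cosetSetoid (G : Type*) [Gyrogroup G] (H : Set G) : Setoid G :=
  Setoid.ker (fun a => Gyrogroup.add a '' H)

/-- The coset space `G/H` of left cosets, with the quotient topology. -/
abbrev CosetSpace (G : Type*) [Gyrogroup G] (H : Set G) := Quotient (cosetSetoid G H)

/-- A strongly topological gyrogroup: there is a (symmetric) neighborhood base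
`basis` at `0` each of whose members is invariant under all gyrations. -/
class StrongTopGyrogroup (G : Type*) [TopologicalSpace G] extends TopGyrogroup G where
  basis : Set (Set G)
  basis_mem_nhds : ∀ U ∈ basis, U ∈ nhds zero
  basis_is_basis : ∀ V ∈ nhds zero, ∃ U ∈ basis, U ⊆ V
  basis_open : ∀ U ∈ basis, IsOpen U
  basis_symm : ∀ U ∈ basis, ∀ x ∈ U, neg x ∈ U
  basis_gyr : ∀ U ∈ basis, ∀ x y : G, gyr x y '' U = U

/-- `H` is an admissible subgyrogroup generated from the base: `H = ⋂ₙ Uₙ`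
for a sequence of open symmetric basic neighborhoods of `0` with
`U_{n+1} ⊕ (U_{n+1} ⊕ U_{n+1}) ⊆ U_n`. -/
def AdmissibleFromBasis (G : Type*) [TopologicalSpace G] [StrongTopGyrogroup G]
    (H : Set G) : Prop :=
  ∃ U : ℕ → Set G, (∀ n, U n ∈ StrongTopGyrogroup.basis (G := G)) ∧
    (∀ n, Set.image2 Gyrogroup.add (U (n+1))
        (Set.image2 Gyrogroup.add (U (n+1)) (U (n+1))) ⊆ U n) ∧
    H = ⋂ n, U n

/-- `Pfam` is a cs-network. -/
def IsCsNetwork {X : Type*} [TopologicalSpace X] (Pfam : Set (Set X)) : Prop :=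
  ∀ (u : ℕ → X) (x : X), Filter.Tendsto u Filter.atTop (nhds x) → ∀ U ∈ nhds x,
    ∃ n₀ : ℕ, ∃ P ∈ Pfam, x ∈ P ∧ (∀ n ≥ n₀, u n ∈ P) ∧ P ⊆ U

/-- `Pfam` is star-countable. -/
def IsStarCountable {X : Type*} (Pfam : Set (Set X)) : Prop :=
  ∀ P ∈ Pfam, {Q ∈ Pfam | (Q ∩ P).Nonempty}.Countable


namespace GyroAux

open Gyrogroup

variable {G : Type*} [Gyrogroup G]

lemma gyr_zero (x y : G) : gyr x y zero = (zero : G) := by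
  obtain ⟨hinj, hsurj⟩ := gyr_bijective (G := G) x y
  have h : ∀ a : G, gyr x y a = add (gyr x y a) (gyr x y zero) := fun a => by
    conv_lhs => rw [← Gyrogroup.add_zero a, gyr_add]
  obtain ⟨a, ha⟩ := hsurj zero
  have h2 := h a
  rw [ha, Gyrogroup.zero_add] at h2
  exact h2.symm

lemma neg_add_add (a b : G) : add (neg a) (add a b) = gyr (neg a) a b := by
  rw [left_gyroassoc, Gyrogroup.neg_add, Gyrogroup.zero_add]

lemma add_left_cancel {a b c : G} (h : add a b = add a c) : b = c := by
  have h2 : gyr (neg a) a b = gyr (neg a) a c := by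
    rw [← neg_add_add, ← neg_add_add, h]
  exact (gyr_bijective (neg a) a).1 h2

lemma gyr_zero_left (y z : G) : gyr zero y z = z := by
  have h := left_gyroassoc (zero : G) y z
  rw [Gyrogroup.zero_add, Gyrogroup.zero_add] at h
  exact (add_left_cancel h).symm

lemma gyr_neg_self (a z : G) : gyr (neg a) a z = z := by
  have h := loop (neg a) a
  rw [Gyrogroup.neg_add] at h
  rw [← h, gyr_zero_left]

lemma left_cancel (a b : G) : add (neg a) (add a b) = b := by
  rw [neg_add_add, gyr_neg_self]

lemma gyr_self_neg (a z : G) : gyr a (neg a) z = z := by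
  have h := loop a (neg a)
  rw [Gyrogroup.add_neg] at h
  rw [← h, gyr_zero_left]

lemma left_cancel' (a b : G) : add a (add (neg a) b) = b := by
  rw [left_gyroassoc, Gyrogroup.add_neg, Gyrogroup.zero_add, gyr_self_neg]

lemma add_gyr_neg (a h : G) : add (add a h) (gyr a h (neg h)) = a := by
  rw [← left_gyroassoc, Gyrogroup.add_neg, Gyrogroup.add_zero]

lemma neg_add_rep (x p q : G) :
    add (neg (add x p)) (add x q) = gyr x p (add (neg p) q) := by
  have h : add x q = add (add x p) (gyr x p (add (neg p) q)) := by
    rw [← left_gyroassoc, left_cancel']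
  rw [h, left_cancel]

lemma eq_gyr_of_add_eq_zero {c v : G} (h : add c v = zero) :
    c = gyr c v (neg v) := by
  have h2 := add_gyr_neg c v
  rw [h, Gyrogroup.zero_add] at h2
  exact h2.symm

noncomputable def gyrEquiv (x y : G) : G ≃ G := Equiv.ofBijective _ (gyr_bijective x y)

@[simp] lemma gyrEquiv_apply (x y z : G) : gyrEquiv x y z = gyr x y z := rfl

lemma gyr_gyrEquiv_symm (x y a : G) : gyr x y ((gyrEquiv x y).symm a) = a :=
  (gyrEquiv x y).apply_symm_apply a

lemma gyrEquiv_symm_add (x y a b : G) :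
    (gyrEquiv x y).symm (add a b) = add ((gyrEquiv x y).symm a) ((gyrEquiv x y).symm b) := by
  apply (gyr_bijective x y).1
  show gyr x y _ = gyr x y _
  rw [gyr_add, gyr_gyrEquiv_symm, gyr_gyrEquiv_symm, gyr_gyrEquiv_symm]

lemma gyr_mem {x y : G} {S : Set G} (hS : gyr x y '' S = S) {a : G} (ha : a ∈ S) :
    gyr x y a ∈ S := hS ▸ Set.mem_image_of_mem _ ha

lemma gyrEquiv_symm_mem {x y : G} {S : Set G} (hS : gyr x y '' S = S) {a : G} (ha : a ∈ S) :
    (gyrEquiv x y).symm a ∈ S := by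
  rw [← hS] at ha
  obtain ⟨b, hb, hba⟩ := ha
  have : (gyrEquiv x y).symm a = b := by
    rw [← hba]; exact (gyrEquiv x y).symm_apply_apply b
  rw [this]; exact hb

end GyroAux
section TopAux

namespace GyroAux

open Gyrogroup

variable {G : Type*} [TopologicalSpace G] [StrongTopGyrogroup G]

lemma continuous_addLeft (a : G) : Continuous fun b : G => add a b :=
  TopGyrogroup.continuous_add.comp (continuous_const.prodMk continuous_id)

lemma continuous_addRight (a : G) : Continuous fun b : G => add b a :=
  TopGyrogroup.continuous_add.comp (continuous_id.prodMk continuous_const)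

lemma image_addLeft (a : G) (S : Set G) :
    (fun b => add a b) '' S = (fun b => add (neg a) b) ⁻¹' S := by
  ext z
  constructor
  · rintro ⟨s, hs, rfl⟩
    simpa [left_cancel] using hs
  · intro hz
    exact ⟨add (neg a) z, hz, left_cancel' a z⟩

lemma isOpen_addLeft_image (a : G) {S : Set G} (hS : IsOpen S) :
    IsOpen ((fun b => add a b) '' S) := by
  rw [image_addLeft]; exact hS.preimage (continuous_addLeft (neg a))

lemma mem_addLeft_image {a z : G} {S : Set G} :
    z ∈ (fun b => add a b) '' S ↔ add (neg a) z ∈ S := by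
  rw [image_addLeft]; rfl

lemma zero_mem_basic {U : Set G} (hU : U ∈ StrongTopGyrogroup.basis (G := G)) :
    (zero : G) ∈ U :=
  mem_of_mem_nhds (StrongTopGyrogroup.basis_mem_nhds U hU)

lemma exists_basic_add_subset {N : Set G} (hN : N ∈ nhds (zero : G)) :
    ∃ W ∈ StrongTopGyrogroup.basis (G := G), Set.image2 add W W ⊆ N := by
  have hc : ContinuousAt (fun p : G × G => add p.1 p.2) ((zero : G), (zero : G)) :=
    TopGyrogroup.continuous_add.continuousAt
  have hN' : (fun p : G × G => add p.1 p.2) ⁻¹' N ∈ nhds ((zero : G), (zero : G)) :=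
    hc.preimage_mem_nhds (by rwa [Gyrogroup.zero_add])
  rw [mem_nhds_prod_iff] at hN'
  obtain ⟨u, hu, v, hv, huv⟩ := hN'
  obtain ⟨W, hW, hWsub⟩ := StrongTopGyrogroup.basis_is_basis (u ∩ v) (Filter.inter_mem hu hv)
  refine ⟨W, hW, ?_⟩
  rintro z ⟨p, hp, q, hq, rfl⟩
  exact huv (Set.mk_mem_prod (hWsub hp).1 (hWsub hq).2)

lemma basic_subset_double {W : Set G} (hW : W ∈ StrongTopGyrogroup.basis (G := G)) :
    W ⊆ Set.image2 add W W :=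
  fun w hw => ⟨w, hw, zero, zero_mem_basic hW, Gyrogroup.add_zero w⟩

lemma closure_subset_add {A V : Set G} (hV : V ∈ StrongTopGyrogroup.basis (G := G)) :
    closure A ⊆ Set.image2 add A V := by
  intro z hz
  have hopen : IsOpen ((fun b => add z b) '' V) :=
    isOpen_addLeft_image z (StrongTopGyrogroup.basis_open V hV)
  have hzmem : z ∈ (fun b => add z b) '' V :=
    ⟨zero, zero_mem_basic hV, Gyrogroup.add_zero z⟩
  rcases mem_closure_iff.1 hz _ hopen hzmem with ⟨a, haV, haA⟩
  obtain ⟨v, hv, hav⟩ := haV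
  refine ⟨a, haA, gyr z v (neg v), ?_, ?_⟩
  · exact gyr_mem (StrongTopGyrogroup.basis_gyr V hV z v)
      (StrongTopGyrogroup.basis_symm V hV v hv)
  · rw [← hav]; exact add_gyr_neg z v

lemma exists_basic_translate {x : G} {U : Set G} (hU : U ∈ nhds x) :
    ∃ W ∈ StrongTopGyrogroup.basis (G := G), (fun b => add x b) '' W ⊆ U := by
  have h : (fun b => add x b) ⁻¹' U ∈ nhds (zero : G) :=
    (continuous_addLeft x).continuousAt.preimage_mem_nhds (by rwa [Gyrogroup.add_zero])
  obtain ⟨W, hW, hWsub⟩ := StrongTopGyrogroup.basis_is_basis _ h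
  refine ⟨W, hW, ?_⟩
  rintro z ⟨w, hw, rfl⟩
  exact hWsub hw

end GyroAux

end TopAux
namespace GyroAux

open Gyrogroup

variable {G : Type*} [TopologicalSpace G] [StrongTopGyrogroup G] {H : Set G}

lemma mk_eq_mk {a b : G} :
    (Quotient.mk (cosetSetoid G H) a = Quotient.mk (cosetSetoid G H) b) ↔
      add a '' H = add b '' H :=
  ⟨fun h => Quotient.exact h, fun h => Quotient.sound h⟩

lemma mem_self_coset (h0 : (zero : G) ∈ H) (a : G) : a ∈ add a '' H :=
  ⟨zero, h0, Gyrogroup.add_zero a⟩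

lemma coset_sub (hgyrH : ∀ x y : G, gyr x y '' H = H)
    (hadd : ∀ a ∈ H, ∀ b ∈ H, add a b ∈ H)
    {a b : G} (hb : b ∈ add a '' H) : add b '' H ⊆ add a '' H := by
  obtain ⟨h, hh, rfl⟩ := hb
  rintro z ⟨h', hh', rfl⟩
  refine ⟨add h ((gyrEquiv a h).symm h'),
    hadd _ hh _ (gyrEquiv_symm_mem (hgyrH a h) hh'), ?_⟩
  show add a (add h ((gyrEquiv a h).symm h')) = add (add a h) h'
  rw [left_gyroassoc, gyr_gyrEquiv_symm]

lemma coset_mem_symm (hgyrH : ∀ x y : G, gyr x y '' H = H)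
    (hneg : ∀ h ∈ H, neg h ∈ H)
    {a b : G} (hb : b ∈ add a '' H) : a ∈ add b '' H := by
  obtain ⟨h, hh, rfl⟩ := hb
  exact ⟨gyr a h (neg h), gyr_mem (hgyrH a h) (hneg h hh), add_gyr_neg a h⟩

lemma coset_eq_iff (hgyrH : ∀ x y : G, gyr x y '' H = H) (h0 : (zero : G) ∈ H)
    (hneg : ∀ h ∈ H, neg h ∈ H) (hadd : ∀ a ∈ H, ∀ b ∈ H, add a b ∈ H)
    {a b : G} : add a '' H = add b '' H ↔ b ∈ add a '' H := by
  constructor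
  · intro h
    rw [h]; exact mem_self_coset h0 b
  · intro hb
    exact Set.Subset.antisymm
      (coset_sub hgyrH hadd (coset_mem_symm hgyrH hneg hb))
      (coset_sub hgyrH hadd hb)

lemma mk_eq_iff_mem (hgyrH : ∀ x y : G, gyr x y '' H = H) (h0 : (zero : G) ∈ H)
    (hneg : ∀ h ∈ H, neg h ∈ H) (hadd : ∀ a ∈ H, ∀ b ∈ H, add a b ∈ H)
    {a b : G} :
    (Quotient.mk (cosetSetoid G H) a = Quotient.mk (cosetSetoid G H) b) ↔
      b ∈ add a '' H :=
  mk_eq_mk.trans (coset_eq_iff hgyrH h0 hneg hadd)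

lemma preimage_image_mk (hgyrH : ∀ x y : G, gyr x y '' H = H) (h0 : (zero : G) ∈ H)
    (hneg : ∀ h ∈ H, neg h ∈ H) (hadd : ∀ a ∈ H, ∀ b ∈ H, add a b ∈ H)
    (O : Set G) :
    Quotient.mk (cosetSetoid G H) ⁻¹' (Quotient.mk (cosetSetoid G H) '' O) =
      ⋃ h ∈ H, (fun z => add z h) ⁻¹' O := by
  ext z
  simp only [Set.mem_preimage, Set.mem_image, Set.mem_iUnion]
  constructor
  · rintro ⟨o, ho, hoz⟩
    have h1 : z ∈ add o '' H := (mk_eq_iff_mem hgyrH h0 hneg hadd).1 hoz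
    have h2 : o ∈ add z '' H := coset_mem_symm hgyrH hneg h1
    obtain ⟨h, hh, hzo⟩ := h2
    exact ⟨h, hh, by simpa [hzo] using ho⟩
  · rintro ⟨h, hh, hzh⟩
    exact ⟨add z h, hzh,
      ((mk_eq_iff_mem hgyrH h0 hneg hadd).2 ⟨h, hh, rfl⟩).symm⟩

lemma isOpenMap_mk (hgyrH : ∀ x y : G, gyr x y '' H = H) (h0 : (zero : G) ∈ H)
    (hneg : ∀ h ∈ H, neg h ∈ H) (hadd : ∀ a ∈ H, ∀ b ∈ H, add a b ∈ H) :
    IsOpenMap (Quotient.mk (cosetSetoid G H)) := by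
  intro O hO
  have hq : Topology.IsQuotientMap (Quotient.mk (cosetSetoid G H)) := isQuotientMap_quot_mk
  rw [← hq.isOpen_preimage, preimage_image_mk hgyrH h0 hneg hadd]
  exact isOpen_biUnion fun h _ => hO.preimage (continuous_addRight h)

lemma continuous_mk : Continuous (Quotient.mk (cosetSetoid G H)) :=
  continuous_quot_mk

end GyroAux
namespace GyroAux

open Gyrogroup

variable {G : Type*} [TopologicalSpace G] [StrongTopGyrogroup G]

lemma zero_mem_tildeO {K W : Set G} (hW : W ∈ StrongTopGyrogroup.basis (G := G))
    (hsub : Set.image2 add W W ⊆ K) (H : Set G) :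
    (zero : G) ∈ (closure (Set.image2 add W (H \ K)))ᶜ := by
  intro hmem
  have h1 := closure_subset_add (A := Set.image2 add W (H \ K)) hW hmem
  obtain ⟨c, hc, v, hv, hcv⟩ := h1
  obtain ⟨w, hw, η, hη, hwη⟩ := hc
  have hcW : c ∈ W := by
    rw [eq_gyr_of_add_eq_zero hcv]
    exact gyr_mem (StrongTopGyrogroup.basis_gyr W hW c v)
      (StrongTopGyrogroup.basis_symm W hW v hv)
  have hK : η ∈ K := hsub ⟨neg w, StrongTopGyrogroup.basis_symm W hW w hw, c, hcW, by
    rw [← hwη]; exact left_cancel w η⟩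
  exact hη.2 hK

lemma mem_K_of_tildeO {K W H : Set G} {t c η : G}
    (ht : t ∈ (closure (Set.image2 add W (H \ K)))ᶜ)
    (hc : c ∈ W) (hη : η ∈ H) (hteq : add c η = t) : η ∈ K := by
  by_contra hnK
  exact ht (subset_closure ⟨c, hc, η, ⟨hη, hnK⟩, hteq⟩)

lemma admissible_props {H : Set G} (hadm : AdmissibleFromBasis G H) :
    (zero : G) ∈ H ∧ (∀ h ∈ H, neg h ∈ H) ∧ (∀ a ∈ H, ∀ b ∈ H, add a b ∈ H) ∧
      (∀ x y : G, gyr x y '' H = H) := by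
  obtain ⟨U, hUb, hUsub, rfl⟩ := hadm
  refine ⟨Set.mem_iInter.2 fun n => zero_mem_basic (hUb n), ?_, ?_, ?_⟩
  · intro h hh
    exact Set.mem_iInter.2 fun n =>
      StrongTopGyrogroup.basis_symm _ (hUb n) h (Set.mem_iInter.1 hh n)
  · intro a ha b hb
    refine Set.mem_iInter.2 fun n => hUsub n ?_
    refine ⟨a, Set.mem_iInter.1 ha (n+1),
      add b zero, ⟨b, Set.mem_iInter.1 hb (n+1), zero, zero_mem_basic (hUb (n+1)), rfl⟩, ?_⟩
    rw [Gyrogroup.add_zero]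
  · intro x y
    rw [Set.image_iInter (gyr_bijective x y)]
    exact Set.iInter_congr fun n => StrongTopGyrogroup.basis_gyr _ (hUb n) x y

lemma exists_trace_base (H : Set G) [hsc : SecondCountableTopology H]
    (h0 : (zero : G) ∈ H) :
    ∃ 𝒦 : Set (Set G), 𝒦.Countable ∧
      (∀ K ∈ 𝒦, K ∈ StrongTopGyrogroup.basis (G := G)) ∧
      (∀ N ∈ nhds (zero : G), ∃ K ∈ 𝒦, H ∩ K ⊆ N) := by
  set B := TopologicalSpace.countableBasis H with hB
  have hBbasis := TopologicalSpace.isBasis_countableBasis H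
  have hBcount := TopologicalSpace.countable_countableBasis H
  have key : ∀ O : Set H, ∃ K : Set G,
      (O ∈ B ∧ (⟨zero, h0⟩ : H) ∈ O) →
        K ∈ StrongTopGyrogroup.basis (G := G) ∧ H ∩ K ⊆ Subtype.val '' O := by
    intro O
    by_cases hO : O ∈ B ∧ (⟨zero, h0⟩ : H) ∈ O
    · obtain ⟨hOB, hO0⟩ := hO
      have hOopen : IsOpen O := hBbasis.isOpen hOB
      rw [isOpen_induced_iff] at hOopen
      obtain ⟨t, ht, htO⟩ := hOopen
      have h0t : (zero : G) ∈ t := by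
        have : (⟨zero, h0⟩ : H) ∈ (Subtype.val ⁻¹' t : Set H) := htO ▸ hO0
        exact this
      obtain ⟨K, hKb, hKt⟩ :=
        StrongTopGyrogroup.basis_is_basis t (ht.mem_nhds h0t)
      refine ⟨K, fun _ => ⟨hKb, ?_⟩⟩
      rintro g ⟨hgH, hgK⟩
      exact ⟨⟨g, hgH⟩, htO ▸ (hKt hgK : g ∈ t), rfl⟩
    · exact ⟨∅, fun h => absurd h hO⟩
  choose f hf using key
  refine ⟨f '' {O ∈ B | (⟨zero, h0⟩ : H) ∈ O},
    (hBcount.mono (Set.sep_subset _ _)).image f, ?_, ?_⟩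
  · rintro K ⟨O, hO, rfl⟩
    exact (hf O ⟨hO.1, hO.2⟩).1
  · intro N hN
    have hpre : (Subtype.val ⁻¹' N : Set H) ∈ nhds (⟨zero, h0⟩ : H) :=
      continuous_subtype_val.continuousAt.preimage_mem_nhds hN
    obtain ⟨O, hOB, hO0, hON⟩ := hBbasis.mem_nhds_iff.1 hpre
    refine ⟨f O, ⟨O, ⟨hOB, hO0⟩, rfl⟩, ?_⟩
    intro g hg
    obtain ⟨⟨g', hg'⟩, hg'O, hval⟩ := (hf O ⟨hOB, hO0⟩).2 hg
    have h2 : g' ∈ N := hON hg'O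
    rwa [show g = g' from hval.symm]

omit [StrongTopGyrogroup G] in
lemma exists_countable_dense_in (H : Set G) [hsc : SecondCountableTopology H] :
    ∃ D : Set G, D.Countable ∧ D ⊆ H ∧
      ∀ h ∈ H, ∀ O : Set G, IsOpen O → h ∈ O → (D ∩ O).Nonempty := by
  obtain ⟨D', hD'c, hD'dense⟩ := TopologicalSpace.exists_countable_dense H
  refine ⟨Subtype.val '' D', hD'c.image _, ?_, ?_⟩
  · rintro d ⟨⟨d', hd'⟩, _, rfl⟩
    exact hd'
  · intro h hh O hO hhO
    have hne : ((Subtype.val ⁻¹' O : Set H)).Nonempty := ⟨⟨h, hh⟩, hhO⟩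
    obtain ⟨x, hxD', hxO⟩ := hD'dense.exists_mem_open (hO.preimage continuous_subtype_val) hne
    exact ⟨x.val, ⟨x, hxD', rfl⟩, hxO⟩

end GyroAux
namespace GyroAux

open Gyrogroup

variable {G : Type*} [TopologicalSpace G] [StrongTopGyrogroup G] {H : Set G}

lemma exists_dense_preimage
    (hgyrH : ∀ x y : G, gyr x y '' H = H) (h0 : (zero : G) ∈ H)
    (hneg : ∀ h ∈ H, neg h ∈ H) (hadd : ∀ a ∈ H, ∀ b ∈ H, add a b ∈ H)
    {D : Set G} (hDc : D.Countable) (hDH : D ⊆ H)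
    (hDdense : ∀ h ∈ H, ∀ O : Set G, IsOpen O → h ∈ O → (D ∩ O).Nonempty)
    {Pfam : Set (Set (CosetSpace G H))} (hPstar : IsStarCountable Pfam)
    (hPcs : IsCsNetwork Pfam)
    {P : Set (CosetSpace G H)} (hP : P ∈ Pfam) :
    ∃ DP : Set G, DP.Countable ∧
      (∀ d ∈ DP, Quotient.mk (cosetSetoid G H) d ∈ P) ∧
      ∀ z : G, Quotient.mk (cosetSetoid G H) z ∈ P → ∀ O : Set G, IsOpen O → z ∈ O →
        (DP ∩ O).Nonempty := by
  classical
  set f : Set (CosetSpace G H) → CosetSpace G H :=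
    fun P' => if h : (P' ∩ P).Nonempty then h.some else Quotient.mk (cosetSetoid G H) zero
    with hfdef
  have hfmem : ∀ P' : Set (CosetSpace G H), (P' ∩ P).Nonempty → f P' ∈ P' ∩ P := by
    intro P' hne
    rw [hfdef]; simp only; rw [dif_pos hne]; exact hne.some_mem
  set SP := f '' {Q ∈ Pfam | (Q ∩ P).Nonempty} with hSP
  have hSPc : SP.Countable := (hPstar P hP).image f
  have hSPP : ∀ s ∈ SP, s ∈ P := by
    rintro s ⟨P', hP', rfl⟩
    exact (hfmem P' hP'.2).2
  have hSPdense : ∀ q ∈ P, ∀ Obar : Set (CosetSpace G H), IsOpen Obar → q ∈ Obar →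
      ∃ s ∈ SP, s ∈ Obar := by
    intro q hq Obar hObar hqObar
    obtain ⟨n0, P', hP', hqP', -, hP'sub⟩ :=
      hPcs (fun _ => q) q tendsto_const_nhds Obar (hObar.mem_nhds hqObar)
    have hne : (P' ∩ P).Nonempty := ⟨q, hqP', hq⟩
    exact ⟨f P', ⟨P', ⟨hP', hne⟩, rfl⟩, hP'sub (hfmem P' hne).1⟩
  refine ⟨Set.image2 (fun s d => add (Quotient.out s) d) SP D,
    hSPc.image2 hDc _, ?_, ?_⟩
  · rintro d' ⟨s, hs, d, hd, rfl⟩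
    have h1 : Quotient.mk (cosetSetoid G H) (add (Quotient.out s) d) =
        Quotient.mk (cosetSetoid G H) (Quotient.out s) :=
      ((mk_eq_iff_mem hgyrH h0 hneg hadd).2 ⟨d, hDH hd, rfl⟩).symm
    rw [h1, Quotient.out_eq]
    exact hSPP s hs
  · intro z hz O hO hzO
    have hopen : IsOpen (Quotient.mk (cosetSetoid G H) '' O) :=
      isOpenMap_mk hgyrH h0 hneg hadd O hO
    obtain ⟨s, hsSP, hsO⟩ := hSPdense _ hz _ hopen ⟨z, hzO, rfl⟩
    obtain ⟨g, hgO, hgs⟩ := hsO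
    have heq : Quotient.mk (cosetSetoid G H) (Quotient.out s) =
        Quotient.mk (cosetSetoid G H) g := by
      rw [hgs]; exact Quotient.out_eq s
    obtain ⟨h, hh, hgeq⟩ := (mk_eq_iff_mem hgyrH h0 hneg hadd).1 heq
    have hO' : IsOpen ((fun b => add (Quotient.out s) b) ⁻¹' O) :=
      hO.preimage (continuous_addLeft _)
    have hhO' : h ∈ (fun b => add (Quotient.out s) b) ⁻¹' O := by
      show add (Quotient.out s) h ∈ O
      rw [hgeq]; exact hgO
    obtain ⟨d, hdD, hdO'⟩ := hDdense h hh _ hO' hhO'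
    exact ⟨add (Quotient.out s) d, ⟨s, hsSP, d, hdD, rfl⟩, hdO'⟩

end GyroAux

/-- If `H` is a second-countable admissible subgyrogroup generated from the base
and `G/H` has a star-countable cs-network, then so does `G`. -/
theorem star_countable_cs_network_of_quotient {G : Type*} [TopologicalSpace G]
    [StrongTopGyrogroup G] (H : Set G) (hadm : AdmissibleFromBasis G H)
    (hsc : SecondCountableTopology H)
    (hPfam : ∃ Pfam : Set (Set (CosetSpace G H)), IsStarCountable Pfam ∧ IsCsNetwork Pfam) :
    ∃ Qfam : Set (Set G), IsStarCountable Qfam ∧ IsCsNetwork Qfam := by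
  classical
  haveI := hsc
  obtain ⟨Pfam, hPstar, hPcs⟩ := hPfam
  obtain ⟨h0, hneg, hadd, hgyrH⟩ := GyroAux.admissible_props hadm
  obtain ⟨𝒦, h𝒦c, h𝒦b, h𝒦tr⟩ := GyroAux.exists_trace_base H h0
  obtain ⟨D, hDc, hDH, hDdense⟩ := GyroAux.exists_countable_dense_in H
  have hWex : ∀ K : Set G, ∃ W, K ∈ 𝒦 →
      W ∈ StrongTopGyrogroup.basis (G := G) ∧ Set.image2 Gyrogroup.add W W ⊆ K := by
    intro K
    by_cases hK : K ∈ 𝒦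
    · obtain ⟨W, hW, hWs⟩ := GyroAux.exists_basic_add_subset
        (StrongTopGyrogroup.basis_mem_nhds K (h𝒦b K hK))
      exact ⟨W, fun _ => ⟨hW, hWs⟩⟩
    · exact ⟨∅, fun h => absurd h hK⟩
  choose Wf hWf using hWex
  have hDPex : ∀ P : Set (CosetSpace G H), ∃ DP : Set G, P ∈ Pfam →
      (DP.Countable ∧ (∀ d ∈ DP, Quotient.mk (cosetSetoid G H) d ∈ P) ∧
        ∀ z : G, Quotient.mk (cosetSetoid G H) z ∈ P → ∀ O : Set G, IsOpen O → z ∈ O →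
          (DP ∩ O).Nonempty) := by
    intro P
    by_cases hP : P ∈ Pfam
    · obtain ⟨DP, h1, h2, h3⟩ := GyroAux.exists_dense_preimage hgyrH h0 hneg hadd
        hDc hDH hDdense hPstar hPcs hP
      exact ⟨DP, fun _ => ⟨h1, h2, h3⟩⟩
    · exact ⟨∅, fun h => absurd h hP⟩
  choose DPf hDPf using hDPex
  set tildeO : Set G → Set G :=
    fun K => (closure (Set.image2 Gyrogroup.add (Wf K) (H \ K)))ᶜ with htildeO
  set mkq : G → CosetSpace G H := Quotient.mk (cosetSetoid G H) with hmkq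
  refine ⟨{Q | ∃ P ∈ Pfam, ∃ d ∈ DPf P, ∃ K ∈ 𝒦,
    Q = mkq ⁻¹' P ∩ ((fun b => Gyrogroup.add d b) '' tildeO K)}, ?_, ?_⟩
  · -- star-countable
    intro Q₀ hQ₀
    obtain ⟨P₀, hP₀, d₀, hd₀, K₀, hK₀, hQ₀eq⟩ := hQ₀
    set I : Set (Set (CosetSpace G H) × G × Set G) :=
      {t | (t.1 ∈ Pfam ∧ (t.1 ∩ P₀).Nonempty) ∧ t.2.1 ∈ DPf t.1 ∧ t.2.2 ∈ 𝒦} with hI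
    have hIc : I.Countable := by
      have hsub : I ⊆ ⋃ P ∈ {Q ∈ Pfam | (Q ∩ P₀).Nonempty}, {P} ×ˢ ((DPf P) ×ˢ 𝒦) := by
        rintro ⟨P, d, K⟩ ⟨⟨h1, h2⟩, h3, h4⟩
        exact Set.mem_biUnion ⟨h1, h2⟩ ⟨rfl, h3, h4⟩
      exact ((hPstar P₀ hP₀).biUnion fun P hP =>
        (Set.countable_singleton P).prod (((hDPf P hP.1).1).prod h𝒦c)).mono hsub
    refine ((hIc.image (fun t => mkq ⁻¹' t.1 ∩
      ((fun b => Gyrogroup.add t.2.1 b) '' tildeO t.2.2)))).mono ?_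
    rintro Q ⟨⟨P, hP, d, hd, K, hK, rfl⟩, hne⟩
    obtain ⟨z, hz1, hz2⟩ := hne
    rw [hQ₀eq] at hz2
    exact ⟨(P, d, K), ⟨⟨hP, ⟨mkq z, hz1.1, hz2.1⟩⟩, hd, hK⟩, rfl⟩
  · -- cs-network
    intro u x hux U hU
    obtain ⟨W₁, hW₁b, hW₁sub⟩ := GyroAux.exists_basic_translate hU
    obtain ⟨C₁, hC₁b, hC₁sub⟩ := GyroAux.exists_basic_add_subset
      (StrongTopGyrogroup.basis_mem_nhds W₁ hW₁b)
    obtain ⟨C₂, hC₂b, hC₂sub⟩ := GyroAux.exists_basic_add_subset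
      (StrongTopGyrogroup.basis_mem_nhds C₁ hC₁b)
    obtain ⟨K, hK𝒦, hKtr⟩ := h𝒦tr C₂ (StrongTopGyrogroup.basis_mem_nhds C₂ hC₂b)
    obtain ⟨hWKb, hWKsub⟩ := hWf K hK𝒦
    obtain ⟨W₂, hW₂b, hW₂sub⟩ := GyroAux.exists_basic_add_subset
      (Filter.inter_mem (StrongTopGyrogroup.basis_mem_nhds C₂ hC₂b)
        (StrongTopGyrogroup.basis_mem_nhds (Wf K) hWKb))
    have hxW₂open : IsOpen ((fun b => Gyrogroup.add x b) '' W₂) :=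
      GyroAux.isOpen_addLeft_image x (StrongTopGyrogroup.basis_open W₂ hW₂b)
    have hxmem : x ∈ (fun b => Gyrogroup.add x b) '' W₂ :=
      ⟨Gyrogroup.zero, GyroAux.zero_mem_basic hW₂b, Gyrogroup.add_zero x⟩
    have himg_nhds : mkq '' ((fun b => Gyrogroup.add x b) '' W₂) ∈ nhds (mkq x) :=
      (GyroAux.isOpenMap_mk hgyrH h0 hneg hadd _ hxW₂open).mem_nhds ⟨x, hxmem, rfl⟩
    have hπu : Filter.Tendsto (fun n => mkq (u n)) Filter.atTop (nhds (mkq x)) :=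
      ((GyroAux.continuous_mk (H := H)).tendsto x).comp hux
    obtain ⟨n₁, P, hPP, hπxP, htail, hPsub⟩ := hPcs _ _ hπu _ himg_nhds
    have htildeOopen : IsOpen (tildeO K) := isClosed_closure.isOpen_compl
    have hOd : IsOpen (((fun b => Gyrogroup.add x b) '' W₂) ∩
        ((fun g => Gyrogroup.add (Gyrogroup.neg g) x) ⁻¹' tildeO K)) := by
      refine hxW₂open.inter (htildeOopen.preimage ?_)
      exact TopGyrogroup.continuous_add.comp
        (TopGyrogroup.continuous_neg.prodMk continuous_const)
    have h0tilde : (Gyrogroup.zero : G) ∈ tildeO K := GyroAux.zero_mem_tildeO hWKb hWKsub H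
    have hxOd : x ∈ ((fun b => Gyrogroup.add x b) '' W₂) ∩
        ((fun g => Gyrogroup.add (Gyrogroup.neg g) x) ⁻¹' tildeO K) := by
      refine ⟨hxmem, ?_⟩
      show Gyrogroup.add (Gyrogroup.neg x) x ∈ tildeO K
      rw [Gyrogroup.neg_add]; exact h0tilde
    obtain ⟨d, hdDP, hdO⟩ := (hDPf P hPP).2.2 x hπxP _ hOd hxOd
    obtain ⟨hdxW₂, hdtilde⟩ := hdO
    obtain ⟨w₂, hw₂, hdw⟩ := hdxW₂
    have hdTopen : IsOpen ((fun b => Gyrogroup.add d b) '' tildeO K) :=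
      GyroAux.isOpen_addLeft_image d htildeOopen
    have hxdT : x ∈ (fun b => Gyrogroup.add d b) '' tildeO K :=
      GyroAux.mem_addLeft_image.2 hdtilde
    obtain ⟨n₂, hn₂⟩ := Filter.eventually_atTop.1 (hux.eventually (hdTopen.mem_nhds hxdT))
    refine ⟨max n₁ n₂, mkq ⁻¹' P ∩ ((fun b => Gyrogroup.add d b) '' tildeO K),
      ⟨P, hPP, d, hdDP, K, hK𝒦, rfl⟩, ⟨hπxP, hxdT⟩, ?_, ?_⟩
    · intro n hn
      exact ⟨htail n (le_trans (le_max_left _ _) hn), hn₂ n (le_trans (le_max_right _ _) hn)⟩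
    · rintro z ⟨hzP, hzd⟩
      obtain ⟨g, hg, hgz⟩ := hPsub hzP
      obtain ⟨wstar, hwstar, hgeq⟩ := hg
      obtain ⟨η, hη, hgηz⟩ := (GyroAux.mk_eq_iff_mem hgyrH h0 hneg hadd).1 hgz
      have ht : Gyrogroup.add (Gyrogroup.neg d) z ∈ tildeO K := GyroAux.mem_addLeft_image.1 hzd
      have hteq : Gyrogroup.add (Gyrogroup.neg d) z =
          Gyrogroup.add (Gyrogroup.add (Gyrogroup.neg d) g)
            (Gyrogroup.gyr (Gyrogroup.neg d) g η) := by
        rw [← hgηz]; exact Gyrogroup.left_gyroassoc _ _ _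
      have hcrep : Gyrogroup.add (Gyrogroup.neg d) g =
          Gyrogroup.gyr x w₂ (Gyrogroup.add (Gyrogroup.neg w₂) wstar) := by
        rw [← hdw, ← hgeq]; exact GyroAux.neg_add_rep x w₂ wstar
      have hcW₂ : Gyrogroup.add (Gyrogroup.neg d) g ∈ Set.image2 Gyrogroup.add W₂ W₂ := by
        rw [hcrep, Gyrogroup.gyr_add]
        exact ⟨_, GyroAux.gyr_mem (StrongTopGyrogroup.basis_gyr W₂ hW₂b x w₂)
          (StrongTopGyrogroup.basis_symm W₂ hW₂b w₂ hw₂), _,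
          GyroAux.gyr_mem (StrongTopGyrogroup.basis_gyr W₂ hW₂b x w₂) hwstar, rfl⟩
      have hηH : Gyrogroup.gyr (Gyrogroup.neg d) g η ∈ H := GyroAux.gyr_mem (hgyrH _ _) hη
      have ht' : Gyrogroup.add (Gyrogroup.add (Gyrogroup.neg d) g)
          (Gyrogroup.gyr (Gyrogroup.neg d) g η) ∈ tildeO K := by rw [← hteq]; exact ht
      have hηK : Gyrogroup.gyr (Gyrogroup.neg d) g η ∈ K :=
        GyroAux.mem_K_of_tildeO ht' (hW₂sub hcW₂).2 hηH rfl
      have hz2 : Gyrogroup.add x (Gyrogroup.add w₂ ((GyroAux.gyrEquiv x w₂).symm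
          (Gyrogroup.add (Gyrogroup.add (Gyrogroup.neg d) g)
            (Gyrogroup.gyr (Gyrogroup.neg d) g η)))) = z := by
        rw [Gyrogroup.left_gyroassoc, GyroAux.gyr_gyrEquiv_symm,
          show Gyrogroup.add x w₂ = d from hdw, ← hteq]
        exact GyroAux.left_cancel' d z
      have hgic : (GyroAux.gyrEquiv x w₂).symm (Gyrogroup.add (Gyrogroup.neg d) g) ∈
          Set.image2 Gyrogroup.add W₂ W₂ := by
        obtain ⟨c₁, hc₁, c₂, hc₂, hceq⟩ := hcW₂
        rw [← hceq, GyroAux.gyrEquiv_symm_add]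
        exact ⟨_, GyroAux.gyrEquiv_symm_mem (StrongTopGyrogroup.basis_gyr W₂ hW₂b x w₂) hc₁,
          _, GyroAux.gyrEquiv_symm_mem (StrongTopGyrogroup.basis_gyr W₂ hW₂b x w₂) hc₂, rfl⟩
      have hgiη : (GyroAux.gyrEquiv x w₂).symm (Gyrogroup.gyr (Gyrogroup.neg d) g η) ∈ H ∩ K :=
        ⟨GyroAux.gyrEquiv_symm_mem (hgyrH x w₂) hηH,
         GyroAux.gyrEquiv_symm_mem (StrongTopGyrogroup.basis_gyr K (h𝒦b K hK𝒦) x w₂) hηK⟩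
      have hsmem : (GyroAux.gyrEquiv x w₂).symm
          (Gyrogroup.add (Gyrogroup.add (Gyrogroup.neg d) g)
            (Gyrogroup.gyr (Gyrogroup.neg d) g η)) ∈ C₁ := by
        rw [GyroAux.gyrEquiv_symm_add]
        exact hC₂sub ⟨_, (hW₂sub hgic).1, _, hKtr hgiη, rfl⟩
      have hw₂C₁ : w₂ ∈ C₁ :=
        hC₂sub (GyroAux.basic_subset_double hC₂b
          ((hW₂sub (GyroAux.basic_subset_double hW₂b hw₂)).1))
      rw [← hz2]
      exact hW₁sub ⟨_, hC₁sub ⟨_, hw₂C₁, _, hsmem, rfl⟩, rfl⟩
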